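/- (Lemma 2.) Let (V_i)_{i ∈ ι} be a finite family of random variables on a standard Borel probability space, let T be a random variable, let S ⊆ ι be a set of selected indices, and let R = ι \ S. Assume that for every r ∈ R, T is conditionally independent of V_r given the family (V_j)_{j ∈ S}. If there exists s ∈ S such that T is conditionally independent of V_s given (V_j)_{j ∈ S \ {s}}, then for every r ∈ R, T is conditionally independent of V_r given (V_j)_{j ∈ S \ {s}}. -/

import Mathlib

open ProbabilityTheory MeasureTheory

/-- The σ-algebra generated jointly by the variables `V j`, `j ∈ B`. -/
def famAlg {Ω ι : Type*} (V : ι → Ω → ℝ) (B : Set ι) : MeasurableSpace Ω :=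
  ⨆ j ∈ B, MeasurableSpace.comap (V j) inferInstance

theorem famAlg_le {Ω ι : Type*} {mΩ : MeasurableSpace Ω} {V : ι → Ω → ℝ}
    (hV : ∀ i, Measurable (V i)) (B : Set ι) : famAlg V B ≤ mΩ :=
  iSup₂_le fun j _ => (hV j).comap_le

/-- `T ⫫ V i | (V_j)_{j ∈ B}`: the σ-algebra generated by `T` is conditionally independent of
the σ-algebra generated by `V i` given the σ-algebra generated jointly by `(V_j)_{j ∈ B}`. -/
def CondIndepVarFam {Ω ι : Type*} {mΩ : MeasurableSpace Ω} [StandardBorelSpace Ω]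
    (μ : Measure Ω) [IsFiniteMeasure μ] (T : Ω → ℝ) (V : ι → Ω → ℝ)
    (hV : ∀ i, Measurable (V i)) (i : ι) (B : Set ι) : Prop :=
  CondIndep (famAlg V B) (MeasurableSpace.comap T inferInstance)
    (MeasurableSpace.comap (V i) inferInstance) (famAlg_le hV B) μ

/-! Write `𝒢` for the σ-algebra of `(V_j)_{j ∈ S \ {s}}`, so that the σ-algebra of `(V_j)_{j ∈ S}`
is `𝒢 ⊔ σ(V_s)`. The lemma is then the contraction property of conditional independence:
`T ⫫ V_s | 𝒢` and `T ⫫ V_r | 𝒢 ⊔ σ(V_s)` give `T ⫫ V_r | 𝒢`.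
The first hypothesis means that for `A ∈ σ(T)` the conditional probability does not change when we
also condition on `V_s`: `P(A | 𝒢 ⊔ σ(V_s)) = P(A | 𝒢)`, which is checked by integrating both sides
over the π-system of sets `c ∩ d` with `c ∈ 𝒢`, `d ∈ σ(V_s)`. Given this, for `C ∈ σ(V_r)` the tower
property and pulling out the `𝒢`-measurable factor `P(A | 𝒢)` turn the second hypothesis into
`P(A ∩ C | 𝒢) = P(A | 𝒢) P(C | 𝒢)`. -/

open MeasurableSpace

section PiSystem

variable {Ω E : Type*} {m m₀ : MeasurableSpace Ω} {μ : Measure Ω}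
  [NormedAddCommGroup E] [NormedSpace ℝ E]

theorem setIntegral_eq_of_isPiSystem {s : Set (Set Ω)} (hm : m ≤ m₀) (h_gen : m = generateFrom s)
    (h_pi : IsPiSystem s) {f g : Ω → E} (hf : Integrable f μ) (hg : Integrable g μ)
    (h_univ : ∫ x, f x ∂μ = ∫ x, g x ∂μ) (h_basic : ∀ t ∈ s, ∫ x in t, f x ∂μ = ∫ x in t, g x ∂μ)
    {t : Set Ω} (ht : MeasurableSet[m] t) :
    ∫ x in t, f x ∂μ = ∫ x in t, g x ∂μ := by
  induction t, ht using induction_on_inter h_gen h_pi with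
  | empty => simp
  | basic t ht => exact h_basic t ht
  | compl t ht ih => rw [setIntegral_compl (hm t ht) hf, setIntegral_compl (hm t ht) hg, h_univ, ih]
  | iUnion t hdisj ht ih =>
    rw [integral_iUnion (fun i ↦ hm _ (ht i)) hdisj hf.integrableOn,
      integral_iUnion (fun i ↦ hm _ (ht i)) hdisj hg.integrableOn]
    exact tsum_congr ih

end PiSystem

namespace MeasurableSpace

variable {Ω : Type*}

theorem isPiSystem_image2_inter (m₁ m₂ : MeasurableSpace Ω) :
    IsPiSystem (Set.image2 (· ∩ ·) {s | MeasurableSet[m₁] s} {s | MeasurableSet[m₂] s}) := by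
  rintro _ ⟨c₁, hc₁, d₁, hd₁, rfl⟩ _ ⟨c₂, hc₂, d₂, hd₂, rfl⟩ -
  exact ⟨c₁ ∩ c₂, hc₁.inter hc₂, d₁ ∩ d₂, hd₁.inter hd₂, Set.inter_inter_inter_comm _ _ _ _⟩

theorem sup_eq_generateFrom_image2_inter (m₁ m₂ : MeasurableSpace Ω) :
    m₁ ⊔ m₂ =
      generateFrom (Set.image2 (· ∩ ·) {s | MeasurableSet[m₁] s} {s | MeasurableSet[m₂] s}) := by
  refine le_antisymm (sup_le ?_ ?_) (generateFrom_le ?_)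
  · exact fun c hc ↦ measurableSet_generateFrom ⟨c, hc, Set.univ, .univ, Set.inter_univ c⟩
  · exact fun d hd ↦ measurableSet_generateFrom ⟨Set.univ, .univ, d, hd, Set.univ_inter d⟩
  · rintro _ ⟨c, hc, d, hd, rfl⟩
    exact (le_sup_left (b := m₂) c hc).inter (le_sup_right (a := m₁) d hd)

end MeasurableSpace

section CondExpIndicator

variable {Ω : Type*} {m mΩ : MeasurableSpace Ω} {μ : Measure Ω}

theorem ae_norm_condExp_indicator_le_one {A : Set Ω} :
    ∀ᵐ x ∂μ, ‖(μ⟦A | m⟧) x‖ ≤ 1 := by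
  have h : ∀ᵐ x ∂μ, |A.indicator (fun _ ↦ (1 : ℝ)) x| ≤ 1 :=
    .of_forall fun x ↦ by by_cases hx : x ∈ A <;> simp [hx]
  simpa only [Real.norm_eq_abs] using ae_bdd_abs_condExp_of_ae_bdd_abs h

end CondExpIndicator

namespace ProbabilityTheory.CondIndep

variable {Ω : Type*} {m' m₁ m₂ m₃ mΩ : MeasurableSpace Ω} [StandardBorelSpace Ω]
  {hm' : m' ≤ mΩ} {μ : Measure Ω} [IsFiniteMeasure μ] {A : Set Ω}

theorem setIntegral_condExp_indicator_inter (h : CondIndep m' m₁ m₂ hm' μ) (hm₁ : m₁ ≤ mΩ)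
    (hm₂ : m₂ ≤ mΩ) (hA : MeasurableSet[m₁] A) {c d : Set Ω} (hc : MeasurableSet[m'] c)
    (hd : MeasurableSet[m₂] d) :
    ∫ x in c ∩ d, (μ⟦A | m'⟧) x ∂μ = ∫ x in c ∩ d, A.indicator (fun _ ↦ (1 : ℝ)) x ∂μ := by
  have hd_int : Integrable (d.indicator fun _ ↦ (1 : ℝ)) μ :=
    (integrable_const 1).indicator (hm₂ d hd)
  have hAd_int : Integrable ((A ∩ d).indicator fun _ ↦ (1 : ℝ)) μ :=
    (integrable_const 1).indicator ((hm₁ A hA).inter (hm₂ d hd))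
  have hbdd : ∀ᵐ x ∂μ, ‖(μ⟦A | m'⟧) x‖ ≤ 1 := ae_norm_condExp_indicator_le_one
  calc ∫ x in c ∩ d, (μ⟦A | m'⟧) x ∂μ
      = ∫ x in c, (μ⟦A | m'⟧ * d.indicator fun _ ↦ (1 : ℝ)) x ∂μ := by
        simp_rw [← setIntegral_indicator (hm₂ d hd), Pi.mul_apply, ← Set.indicator_mul_right,
          mul_one]
    _ = ∫ x in c, (μ[μ⟦A | m'⟧ * d.indicator fun _ ↦ (1 : ℝ) | m']) x ∂μ :=
        (setIntegral_condExp hm'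
          (hd_int.bdd_mul integrable_condExp.aestronglyMeasurable hbdd) hc).symm
    _ = ∫ x in c, (μ⟦A | m'⟧ * μ⟦d | m'⟧) x ∂μ := by
        refine setIntegral_congr_ae (hm' c hc) ?_
        filter_upwards [condExp_stronglyMeasurable_mul_of_bound hm' stronglyMeasurable_condExp
          hd_int 1 hbdd] with x hx _ using hx
    _ = ∫ x in c, (μ⟦A ∩ d | m'⟧) x ∂μ := by
        refine setIntegral_congr_ae (hm' c hc) ?_
        filter_upwards [(condIndep_iff m' m₁ m₂ hm' hm₁ hm₂ μ).mp h A d hA hd]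
          with x hx _ using hx.symm
    _ = ∫ x in c ∩ d, A.indicator (fun _ ↦ (1 : ℝ)) x ∂μ := by
        rw [setIntegral_condExp hm' hAd_int hc, Set.inter_comm A d, ← Set.indicator_indicator,
          setIntegral_indicator (hm₂ d hd)]

theorem condExp_indicator_sup_ae_eq (h : CondIndep m' m₁ m₂ hm' μ) (hm₁ : m₁ ≤ mΩ)
    (hm₂ : m₂ ≤ mΩ) (hA : MeasurableSet[m₁] A) :
    μ⟦A | m' ⊔ m₂⟧ =ᵐ[μ] μ⟦A | m'⟧ := by
  have hA_int : Integrable (A.indicator fun _ ↦ (1 : ℝ)) μ :=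
    (integrable_const 1).indicator (hm₁ A hA)
  refine (ae_eq_condExp_of_forall_setIntegral_eq (sup_le hm' hm₂) hA_int
    (fun _ _ _ ↦ integrable_condExp.integrableOn) (fun t ht _ ↦ ?_)
    (stronglyMeasurable_condExp.mono (le_sup_left : m' ≤ m' ⊔ m₂)).aestronglyMeasurable).symm
  refine setIntegral_eq_of_isPiSystem (sup_le hm' hm₂) (sup_eq_generateFrom_image2_inter m' m₂)
    (isPiSystem_image2_inter m' m₂) integrable_condExp hA_int (integral_condExp hm') ?_ ht
  rintro _ ⟨c, hc, d, hd, rfl⟩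
  exact h.setIntegral_condExp_indicator_inter hm₁ hm₂ hA hc hd

theorem of_condIndep_sup (h₁ : CondIndep m' m₁ m₂ hm' μ) (hm₁ : m₁ ≤ mΩ) (hm₂ : m₂ ≤ mΩ)
    (hm₃ : m₃ ≤ mΩ) (h₂ : CondIndep (m' ⊔ m₂) m₁ m₃ (sup_le hm' hm₂) μ) :
    CondIndep m' m₁ m₃ hm' μ := by
  rw [condIndep_iff _ _ _ _ hm₁ hm₃] at h₂ ⊢
  intro A C hA hC
  have tower : ∀ B : Set Ω, μ[μ⟦B | m' ⊔ m₂⟧ | m'] =ᵐ[μ] μ⟦B | m'⟧ :=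
    fun _ ↦ condExp_condExp_of_le le_sup_left (sup_le hm' hm₂)
  calc μ⟦A ∩ C | m'⟧
      =ᵐ[μ] μ[μ⟦A ∩ C | m' ⊔ m₂⟧ | m'] := (tower _).symm
    _ =ᵐ[μ] μ[μ⟦A | m'⟧ * μ⟦C | m' ⊔ m₂⟧ | m'] :=
        condExp_congr_ae ((h₂ A C hA hC).trans
          ((h₁.condExp_indicator_sup_ae_eq hm₁ hm₂ hA).mul .rfl))
    _ =ᵐ[μ] μ⟦A | m'⟧ * μ[μ⟦C | m' ⊔ m₂⟧ | m'] :=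
        condExp_stronglyMeasurable_mul_of_bound hm' stronglyMeasurable_condExp integrable_condExp 1
          ae_norm_condExp_indicator_le_one
    _ =ᵐ[μ] μ⟦A | m'⟧ * μ⟦C | m'⟧ := Filter.EventuallyEq.rfl.mul (tower C)

end ProbabilityTheory.CondIndep

theorem famAlg_eq_diff_singleton_sup {Ω ι : Type*} (V : ι → Ω → ℝ) {S : Set ι} {s : ι}
    (hs : s ∈ S) : famAlg V S = famAlg V (S \ {s}) ⊔ MeasurableSpace.comap (V s) inferInstance := by
  conv_lhs => rw [← Set.insert_eq_of_mem hs, ← Set.insert_sdiff_singleton]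
  exact iSup_insert.trans (sup_comm _ _)

theorem lemma2_condIndep_general {Ω ι : Type*} {mΩ : MeasurableSpace Ω} [StandardBorelSpace Ω]
    (μ : Measure Ω) [IsProbabilityMeasure μ]
    (T : Ω → ℝ) (V : ι → Ω → ℝ) (hT : Measurable T) (hV : ∀ i, Measurable (V i))
    (S : Set ι)
    (hrem : ∀ r ∈ Set.univ \ S, CondIndepVarFam μ T V hV r S)
    (s : ι) (hs : s ∈ S) (hsind : CondIndepVarFam μ T V hV s (S \ {s})) :
    ∀ r ∈ Set.univ \ S, CondIndepVarFam μ T V hV r (S \ {s}) := by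
  intro r hr
  have h := hrem r hr
  simp only [CondIndepVarFam, famAlg_eq_diff_singleton_sup V hs] at h
  exact hsind.of_condIndep_sup hT.comap_le (hV s).comap_le (hV r).comap_le h

/-- Lemma 2. -/
theorem lemma2_condIndep {Ω ι : Type*} {mΩ : MeasurableSpace Ω} [StandardBorelSpace Ω]
    [Fintype ι] (μ : Measure Ω) [IsProbabilityMeasure μ]
    (T : Ω → ℝ) (V : ι → Ω → ℝ) (hT : Measurable T) (hV : ∀ i, Measurable (V i))
    (S : Set ι)
    (hrem : ∀ r ∈ Set.univ \ S, CondIndepVarFam μ T V hV r S)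
    (s : ι) (hs : s ∈ S) (hsind : CondIndepVarFam μ T V hV s (S \ {s})) :
    ∀ r ∈ Set.univ \ S, CondIndepVarFam μ T V hV r (S \ {s}) :=
  lemma2_condIndep_general (mΩ := mΩ) μ T V hT hV S hrem s hs hsind
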